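/- Suppose x₁,…,xₙ are linearly independent and the GRW weights satisfy Assumption 1, with limiting weights q₁,…,qₙ and F(θ) = Σᵢ qᵢ φ(yᵢ⟨θ,xᵢ⟩). For all sufficiently large R the minimizer θ_R of F over the closed ball {θ : ‖θ‖₂ ≤ R} is unique. Suppose moreover that the limit u = lim_{R→∞} θ_R / R exists. Then there exists η₀ > 0 such that for every learning rate 0 < η ≤ η₀, the GRW iterates satisfy: the limit lim_{t→∞} θ^{(t)} / ‖θ^{(t)}‖₂ exists and equals u. -/

import Mathlib

/-!
Let `F θ = ∑ᵢ qᵢ φ(yᵢ⟪θ, xᵢ⟫)` and, by linear independence, pick `v` with `⟪v, xᵢ⟫ = yᵢ`.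
Moving along `v` raises every margin, so `F` strictly decreases and minimizers over a ball lie
on its sphere; convexity of `F` and strict convexity of the ball then make them unique.

For GRW, linear independence makes `∑ᵢ cᵢ xᵢ ↦ c` bounded, so the step direction `gₜ` differs
from `∇F(θₜ)` by `o(‖∇F(θₜ)‖)`. For `η ≤ 1/(4(L+1))` the iteration is thus eventually a descent
method for `F`: `∑ₜ ‖∇F(θₜ)‖² < ∞`, all margins and `‖θₜ‖` tend to `∞`, and `⟪θₜ, v⟫` grows by
at least the length of each step. Now fix `t` with `‖θₜ‖ = B` large and let `z = θ_B`. From a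
late time `T` at which `‖θ_T‖` crosses `δB`, the distance `‖θᵣ - z‖²` grows only by `o(B²)`, because
`⟪∇F(θᵣ), θᵣ - z⟫ ≥ F(θᵣ) - F(z) ≥ 0`. If `⟪θᵣ/‖θᵣ‖, u⟫ ≥ σ₀` eventually, this gives
`⟪θₜ/‖θₜ‖, u⟫ ≥ (1 + 2δσ₀ - δ²)/2 - o(1)`; so the liminf `σ` of the cosines satisfies
`σ ≥ (1 + δ)/2` for all `δ < 1`, i.e. `σ = 1`.
-/

open scoped RealInnerProductSpace Topology NNReal
open Filter

theorem ConvexOn.add_mul_sub_le_of_hasDerivAt {f : ℝ → ℝ} {f' a : ℝ}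
    (hf : ConvexOn ℝ Set.univ f) (hd : HasDerivAt f f' a) (b : ℝ) :
    f a + f' * (b - a) ≤ f b := by
  rcases lt_trichotomy a b with hab | rfl | hab
  · have h := hf.le_slope_of_hasDerivAt trivial trivial hab hd
    rw [slope_def_field, le_div_iff₀ (sub_pos.2 hab)] at h
    linarith
  · simp
  · have h := hf.slope_le_of_hasDerivAt trivial trivial hab hd
    rw [slope_def_field, div_le_iff₀ (sub_pos.2 hab)] at h
    linarith

theorem ConvexOn.monotone_of_hasDerivAt {f f' : ℝ → ℝ} (hf : ConvexOn ℝ Set.univ f)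
    (hd : ∀ a, HasDerivAt f (f' a) a) : Monotone f' := by
  have hderiv : deriv f = f' := funext fun a => (hd a).deriv
  simpa [hderiv] using hf.monotoneOn_deriv fun a _ => (hd a).differentiableAt

theorem ConvexOn.deriv_neg_of_strictAnti {f f' : ℝ → ℝ} (hf : ConvexOn ℝ Set.univ f)
    (hd : ∀ a, HasDerivAt f (f' a) a) (hanti : StrictAnti f) (a : ℝ) : f' a < 0 := by
  have h := hf.add_mul_sub_le_of_hasDerivAt (hd a) (a + 1)
  linarith [hanti (lt_add_one a)]

/-- The descent lemma: `L/2 s² - f s` is convex since its derivative `L s - f' s` is monotone. -/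
theorem image_add_le_of_lipschitzWith_deriv {f f' : ℝ → ℝ} {L : ℝ≥0}
    (hd : ∀ a, HasDerivAt f (f' a) a) (hlip : LipschitzWith L f') (a h : ℝ) :
    f (a + h) ≤ f a + f' a * h + L / 2 * h ^ 2 := by
  set ψ : ℝ → ℝ := fun s => L / 2 * s ^ 2 - f s
  have hψ : ∀ s, HasDerivAt ψ (L * s - f' s) s := fun s => by
    refine (((hasDerivAt_pow 2 s).const_mul ((L : ℝ) / 2)).sub (hd s)).congr_deriv ?_
    push_cast
    ring
  have hmono : Monotone fun s => (L : ℝ) * s - f' s := fun s t hst => by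
    have h := hlip.dist_le_mul t s
    rw [Real.dist_eq, Real.dist_eq, abs_of_nonneg (sub_nonneg.2 hst)] at h
    linarith [le_abs_self (f' t - f' s)]
  have hconv : ConvexOn ℝ Set.univ ψ :=
    Monotone.convexOn_univ_of_deriv (fun s => (hψ s).differentiableAt)
      (by rwa [funext fun s => (hψ s).deriv])
  have h := hconv.add_mul_sub_le_of_hasDerivAt (hψ a) (a + h)
  simp only [ψ] at h
  linarith

theorem Monotone.tendsto_atTop_of_tendsto_zero {α : Type*} {l : Filter α} {f' : ℝ → ℝ}
    {m : α → ℝ} (hmono : Monotone f') (hneg : ∀ a, f' a < 0)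
    (h : Tendsto (fun t => f' (m t)) l (𝓝 0)) : Tendsto m l atTop :=
  tendsto_atTop.2 fun C => (h.eventually (lt_mem_nhds (hneg C))).mono
    fun _ ht => (hmono.reflect_lt ht).le

theorem exists_crossing {f : ℕ → ℝ} {a M : ℝ} {S t : ℕ} (hSt : S ≤ t) (hS : f S < a)
    (ht : a ≤ f t) (hstep : ∀ r, S ≤ r → f (r + 1) ≤ f r + M) :
    ∃ T, S < T ∧ T ≤ t ∧ a ≤ f T ∧ f T ≤ a + M := by
  induction t, hSt using Nat.le_induction with
  | base => exact absurd ht (not_le.2 hS)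
  | succ t hSt ih =>
    by_cases h : a ≤ f t
    · obtain ⟨T, h1, h2, h3⟩ := ih h
      exact ⟨T, h1, h2.trans t.le_succ, h3⟩
    · exact ⟨t + 1, Nat.lt_succ_of_le hSt, le_rfl, ht, by linarith [hstep t hSt]⟩

theorem le_add_sum_Ico_of_le_add {f b : ℕ → ℝ} {s t : ℕ} (hst : s ≤ t)
    (h : ∀ r, s ≤ r → r < t → f (r + 1) ≤ f r + b r) :
    f t ≤ f s + ∑ r ∈ Finset.Ico s t, b r := by
  induction t, hst using Nat.le_induction with
  | base => simp
  | succ t hst ih =>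
    rw [Finset.sum_Ico_succ_top hst]
    linarith [ih fun r h1 h2 => h r h1 (h2.trans t.lt_succ_self), h t hst t.lt_succ_self]

theorem eventually_forall_le_of_eventually_succ_le {a : ℕ → ℝ}
    (h : ∀ᶠ r in atTop, a (r + 1) ≤ a r) : ∀ᶠ s in atTop, ∀ t, s ≤ t → a t ≤ a s := by
  obtain ⟨N, hN⟩ := eventually_atTop.1 h
  filter_upwards [eventually_ge_atTop N] with s hs t hst
  simpa using le_add_sum_Ico_of_le_add (b := 0) hst fun r h₁ _ => by
    simpa using hN r (hs.trans h₁)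

theorem summable_of_eventually_le_sub {a b : ℕ → ℝ} (ha : ∀ r, 0 ≤ a r) (hb : ∀ r, 0 ≤ b r)
    (h : ∀ᶠ r in atTop, a (r + 1) ≤ a r - b r) : Summable b := by
  obtain ⟨N, hN⟩ := eventually_atTop.1 h
  refine (summable_nat_add_iff N).1 (summable_of_sum_range_le (c := a N) (fun k => hb _) ?_)
  intro m
  have h := le_add_sum_Ico_of_le_add (f := fun k => a (k + N)) (b := fun k => -b (k + N))
    m.zero_le fun r _ _ => by
      rw [Nat.add_right_comm]
      linarith [hN (r + N) (Nat.le_add_left N r)]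
  rw [← Finset.range_eq_Ico, Finset.sum_neg_distrib, zero_add] at h
  linarith [ha (m + N)]

theorem tendsto_one_of_liminf_bootstrap {c : ℕ → ℝ} (hc : ∀ t, |c t| ≤ 1)
    (h : ∀ δ, 0 < δ → δ < 1 → ∀ σ₀, -1 ≤ σ₀ → (∀ᶠ t in atTop, σ₀ ≤ c t) →
      ∀ ε > 0, ∀ᶠ t in atTop, (1 + 2 * δ * σ₀ - δ ^ 2) / 2 - ε ≤ c t) :
    Tendsto c atTop (𝓝 1) := by
  have hle : ∀ t, c t ≤ 1 := fun t => (abs_le.1 (hc t)).2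
  have hge : ∀ t, -1 ≤ c t := fun t => (abs_le.1 (hc t)).1
  have hbdd_le : IsBoundedUnder (· ≤ ·) atTop c := isBoundedUnder_of ⟨1, hle⟩
  have hbdd_ge : IsBoundedUnder (· ≥ ·) atTop c := isBoundedUnder_of ⟨-1, hge⟩
  set σ := liminf c atTop
  have hfix : ∀ δ, 0 < δ → δ < 1 → (1 + 2 * δ * σ - δ ^ 2) / 2 ≤ σ := by
    intro δ hδ0 hδ1
    refine le_of_forall_pos_le_add fun ε hε => ?_
    set σ₀ := max (σ - ε / 2) (-1)
    have hev : ∀ᶠ t in atTop, σ₀ ≤ c t := by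
      filter_upwards [eventually_lt_of_lt_liminf (by linarith : σ - ε / 2 < σ) hbdd_ge] with t ht
      exact max_le ht.le (hge t)
    have h1 := le_liminf_of_le hbdd_le.isCoboundedUnder_ge
      (h δ hδ0 hδ1 σ₀ (le_max_right _ _) hev (ε / 2) (by positivity))
    have h2 : 2 * δ * (σ - ε / 2) ≤ 2 * δ * σ₀ := by gcongr; exact le_max_left _ _
    nlinarith
  have hσ : 1 ≤ σ := by
    by_contra! hlt
    -- `σ ≥ (1 + 2δσ - δ²)/2` amounts to `σ ≥ (1 + δ)/2`; take `δ ≥ σ`.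
    have hδ := hfix (max σ (1 / 2)) (by positivity) (max_lt hlt (by norm_num))
    nlinarith [le_max_left σ (1 / 2), max_lt hlt (by norm_num : (1 : ℝ) / 2 < 1)]
  exact tendsto_of_le_liminf_of_limsup_le hσ
    (limsup_le_of_le hbdd_ge.isCoboundedUnder_le (Eventually.of_forall hle)) hbdd_le hbdd_ge

section NormedGroup

variable {V : Type*} [SeminormedAddCommGroup V]

theorem norm_le_two_mul_of_norm_sub_le {g G : V} {c : ℝ} (h : ‖g - G‖ ≤ c * ‖G‖)
    (hc : c ≤ 1 / 2) : ‖G‖ ≤ 2 * ‖g‖ ∧ ‖g‖ ≤ 2 * ‖G‖ := by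
  have h' : ‖g - G‖ ≤ ‖G‖ / 2 := h.trans (by nlinarith [norm_nonneg G])
  constructor
  · linarith [norm_sub_norm_le G g, norm_sub_rev g G]
  · linarith [norm_sub_norm_le g G, norm_nonneg G]

theorem eventually_norm_sub_le_mul_norm {g G : ℕ → V} {κ : ℕ → ℝ}
    (hgG : ∀ r, ‖g r - G r‖ ≤ κ r * ‖G r‖) (hκ : Tendsto κ atTop (𝓝 0)) {ε : ℝ} (hε : 0 < ε) :
    ∀ᶠ r in atTop, ‖g r - G r‖ ≤ ε * ‖g r‖ := by
  filter_upwards [hκ.eventually (ge_mem_nhds (half_pos hε)),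
    hκ.eventually (ge_mem_nhds (by norm_num : (0 : ℝ) < 1 / 2))] with r hr hr'
  have hG := (norm_le_two_mul_of_norm_sub_le (hgG r) hr').1
  rcases le_total (κ r) 0 with hneg | hpos
  · nlinarith [hgG r, norm_nonneg (G r), norm_nonneg (g r)]
  · nlinarith [hgG r, mul_le_mul_of_nonneg_left hG hpos,
      mul_le_mul_of_nonneg_right hr (norm_nonneg (g r))]

theorem summable_sq_of_norm_sub_le {g G : ℕ → V} {κ : ℕ → ℝ}
    (hgG : ∀ r, ‖g r - G r‖ ≤ κ r * ‖G r‖) (hκ : Tendsto κ atTop (𝓝 0))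
    (hG : Summable fun r => ‖G r‖ ^ 2) : Summable fun r => ‖g r‖ ^ 2 := by
  refine Summable.of_norm_bounded_eventually_nat (hG.mul_left 4) ?_
  filter_upwards [hκ.eventually (ge_mem_nhds (by norm_num : (0 : ℝ) < 1 / 2))] with r hr
  have h := (norm_le_two_mul_of_norm_sub_le (hgG r) hr).2
  rw [Real.norm_of_nonneg (sq_nonneg _)]
  nlinarith [norm_nonneg (g r)]

end NormedGroup

section NormedSpace

variable {V : Type*} [NormedAddCommGroup V] [NormedSpace ℝ V]

theorem norm_inv_norm_smul_le (x : V) : ‖‖x‖⁻¹ • x‖ ≤ 1 := by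
  rcases eq_or_ne x 0 with rfl | hx
  · simp
  · exact (norm_smul_inv_norm hx).le

theorem norm_sum_smul_le {ι : Type*} [Fintype ι] {x : ι → V} (hx : ∀ i, ‖x i‖ ≤ 1)
    (c : ι → ℝ) : ‖∑ i, c i • x i‖ ≤ ∑ i, |c i| :=
  (norm_sum_le _ _).trans <| Finset.sum_le_sum fun i _ => by
    rw [norm_smul, Real.norm_eq_abs]
    exact mul_le_of_le_one_right (abs_nonneg _) (hx i)

theorem LinearIndependent.exists_norm_le_mul_norm_sum {ι : Type*} [Fintype ι] {x : ι → V}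
    (hli : LinearIndependent ℝ x) : ∃ K > 0, ∀ c : ι → ℝ, ‖c‖ ≤ K * ‖∑ i, c i • x i‖ := by
  obtain ⟨K, hK, hanti⟩ := (Fintype.linearCombination ℝ x).exists_antilipschitzWith
    (LinearMap.ker_eq_bot.2 hli.fintypeLinearCombination_injective)
  exact ⟨K, hK, fun c => hanti.le_mul_norm (map_zero _) c⟩

theorem norm_eq_of_isMinOn_closedBall {F : V → ℝ} {v z : V} {R : ℝ}
    (hv : ∀ θ, ∀ ε : ℝ, 0 < ε → F (θ + ε • v) < F θ) (hz : z ∈ Metric.closedBall 0 R)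
    (hmin : IsMinOn F (Metric.closedBall 0 R) z) : ‖z‖ = R := by
  rw [mem_closedBall_zero_iff] at hz
  refine hz.antisymm (not_lt.1 fun hlt => ?_)
  have hv0 : v ≠ 0 := by
    rintro rfl
    simpa using hv 0 1 one_pos
  set ε := (R - ‖z‖) / ‖v‖
  have hε : 0 < ε := div_pos (by linarith) (norm_pos_iff.2 hv0)
  have hmem : z + ε • v ∈ Metric.closedBall 0 R := by
    rw [mem_closedBall_zero_iff]
    calc ‖z + ε • v‖ ≤ ‖z‖ + ε * ‖v‖ := by
          simpa [norm_smul, abs_of_pos hε] using norm_add_le z (ε • v)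
      _ = R := by
          simp only [ε]
          field_simp
          ring
  exact (hv z ε hε).not_ge (isMinOn_iff.1 hmin _ hmem)

theorem eq_of_isMinOn_closedBall [StrictConvexSpace ℝ V] {F : V → ℝ} {R : ℝ} {z₁ z₂ : V}
    (hF : ConvexOn ℝ (Metric.closedBall 0 R) F)
    (hsphere : ∀ z ∈ Metric.closedBall (0 : V) R, IsMinOn F (Metric.closedBall 0 R) z → ‖z‖ = R)
    (h₁ : z₁ ∈ Metric.closedBall 0 R) (hmin₁ : IsMinOn F (Metric.closedBall 0 R) z₁)
    (h₂ : z₂ ∈ Metric.closedBall 0 R) (hmin₂ : IsMinOn F (Metric.closedBall 0 R) z₂) :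
    z₁ = z₂ := by
  by_contra hne
  set m := (1 / 2 : ℝ) • z₁ + (1 / 2 : ℝ) • z₂
  have hm : ‖m‖ < R := norm_combo_lt_of_ne (mem_closedBall_zero_iff.1 h₁)
    (mem_closedBall_zero_iff.1 h₂) hne (by norm_num) (by norm_num) (by norm_num)
  have hFm : F m ≤ F z₁ := by
    have hconv := hF.2 h₁ h₂ (by norm_num : (0 : ℝ) ≤ 1 / 2) (by norm_num : (0 : ℝ) ≤ 1 / 2)
      (by norm_num)
    have h12 := isMinOn_iff.1 hmin₂ z₁ h₁
    simp only [smul_eq_mul] at hconv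
    linarith
  have hmin : IsMinOn F (Metric.closedBall 0 R) m :=
    isMinOn_iff.2 fun w hw => hFm.trans (isMinOn_iff.1 hmin₁ w hw)
  exact hm.ne (hsphere m (mem_closedBall_zero_iff.2 hm.le) hmin)

theorem norm_sub_le_add_sum {θ g : ℕ → V} {η : ℝ} (hη : 0 ≤ η)
    (hθ : ∀ r, θ (r + 1) = θ r - η • g r) (z : V) {T r : ℕ} (hTr : T ≤ r) :
    ‖θ r - z‖ ≤ ‖θ T - z‖ + ∑ k ∈ Finset.Ico T r, η * ‖g k‖ := by
  refine le_add_sum_Ico_of_le_add (f := fun k => ‖θ k - z‖) hTr fun k _ _ => ?_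
  rw [hθ k, sub_right_comm]
  calc ‖θ k - z - η • g k‖ ≤ ‖θ k - z‖ + ‖η • g k‖ := norm_sub_le _ _
    _ = ‖θ k - z‖ + η * ‖g k‖ := by rw [norm_smul, Real.norm_of_nonneg hη]

end NormedSpace

variable {E : Type*} [NormedAddCommGroup E] [InnerProductSpace ℝ E]

theorem tendsto_of_inner_tendsto_one {α : Type*} {l : Filter α} {a : α → E} {u : E}
    (hu : ‖u‖ = 1) (ha : ∀ᶠ t in l, ‖a t‖ = 1) (h : Tendsto (fun t => ⟪a t, u⟫) l (𝓝 1)) :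
    Tendsto a l (𝓝 u) := by
  have hsq : Tendsto (fun t => ‖a t - u‖ ^ 2) l (𝓝 0) := by
    have h2 : Tendsto (fun t => 2 - 2 * ⟪a t, u⟫) l (𝓝 0) := by
      simpa using (h.const_mul 2).const_sub 2
    refine h2.congr' ?_
    filter_upwards [ha] with t ht
    rw [norm_sub_sq_real, ht, hu]
    ring
  rw [tendsto_iff_norm_sub_tendsto_zero]
  simpa using hsq.sqrt

theorem LinearIndependent.exists_inner_eq {ι : Type*} [Fintype ι] {x : ι → E}
    (hli : LinearIndependent ℝ x) (y : ι → ℝ) : ∃ v : E, ∀ i, ⟪v, x i⟫ = y i := by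
  set S := Submodule.span ℝ (Set.range x)
  have : FiniteDimensional ℝ S := FiniteDimensional.span_of_finite ℝ (Set.finite_range x)
  have : CompleteSpace S := FiniteDimensional.complete ℝ S
  set b := Module.Basis.span hli
  refine ⟨(InnerProductSpace.toDual ℝ S).symm (LinearMap.toContinuousLinearMap (b.constr ℝ y)),
    fun i => ?_⟩
  rw [← Module.Basis.coe_span_apply hli i, ← Submodule.coe_inner,
    InnerProductSpace.toDual_symm_apply]
  exact b.constr_basis ℝ y i

theorem abs_mul_inner_le_norm {x : E} {y : ℝ} (hx : ‖x‖ ≤ 1) (hy : |y| = 1) (θ : E) :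
    |y * ⟪θ, x⟫| ≤ ‖θ‖ := by
  rw [abs_mul, hy, one_mul]
  exact (abs_real_inner_le_norm θ x).trans (mul_le_of_le_one_right (norm_nonneg θ) hx)

theorem le_sub_of_smooth {F : E → ℝ} {a g G : E} {L η : ℝ} (hη : 0 ≤ η)
    (hLη : L * η ≤ 1 / 4) (hF : ∀ h, F (a + h) ≤ F a + ⟪G, h⟫ + L / 2 * ‖h‖ ^ 2)
    (hgG : ‖g - G‖ ≤ ‖G‖ / 4) :
    F (a - η • g) ≤ F a - η / 4 * ‖G‖ ^ 2 := by
  have hinner : 3 / 4 * ‖G‖ ^ 2 ≤ ⟪G, g⟫ := by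
    have hsplit : ⟪G, g⟫ = ‖G‖ ^ 2 + ⟪G, g - G⟫ := by
      rw [inner_sub_right, real_inner_self_eq_norm_sq]
      ring
    nlinarith [neg_le_of_abs_le (abs_real_inner_le_norm G (g - G)),
      mul_le_mul_of_nonneg_left hgG (norm_nonneg G)]
  have hg : ‖g‖ ^ 2 ≤ 25 / 16 * ‖G‖ ^ 2 := by
    nlinarith [norm_sub_norm_le g G, norm_nonneg g, norm_nonneg G]
  have hquad : L / 2 * (η ^ 2 * ‖g‖ ^ 2) ≤ 1 / 4 * (η * (25 / 16 * ‖G‖ ^ 2)) / 2 := by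
    calc L / 2 * (η ^ 2 * ‖g‖ ^ 2) = L * η * (η * ‖g‖ ^ 2) / 2 := by ring
      _ ≤ 1 / 4 * (η * (25 / 16 * ‖G‖ ^ 2)) / 2 := by gcongr
  have h := hF (-(η • g))
  rw [← sub_eq_add_neg, inner_neg_right, real_inner_smul_right, norm_neg, norm_smul,
    Real.norm_of_nonneg hη, mul_pow] at h
  nlinarith [mul_le_mul_of_nonneg_left hinner hη]

theorem eventually_descent {θ g G : ℕ → E} {κ : ℕ → ℝ} {F : E → ℝ} {L η : ℝ} (hη : 0 ≤ η)
    (hLη : L * η ≤ 1 / 4) (hθ : ∀ r, θ (r + 1) = θ r - η • g r)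
    (hF : ∀ r h, F (θ r + h) ≤ F (θ r) + ⟪G r, h⟫ + L / 2 * ‖h‖ ^ 2)
    (hgG : ∀ r, ‖g r - G r‖ ≤ κ r * ‖G r‖) (hκ : Tendsto κ atTop (𝓝 0)) :
    ∀ᶠ r in atTop, F (θ (r + 1)) ≤ F (θ r) - η / 4 * ‖G r‖ ^ 2 := by
  filter_upwards [hκ.eventually (ge_mem_nhds (by norm_num : (0 : ℝ) < 1 / 4))] with r hr
  rw [hθ r]
  exact le_sub_of_smooth hη hLη (hF r) ((hgG r).trans (by nlinarith [norm_nonneg (G r)]))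

theorem norm_sub_smul_sub_sq_le {a z g G : E} {η : ℝ} (hη : 0 ≤ η) (hG : 0 ≤ ⟪G, a - z⟫) :
    ‖a - η • g - z‖ ^ 2 ≤ ‖a - z‖ ^ 2 + 2 * η * (‖a - z‖ * ‖g - G‖) + η ^ 2 * ‖g‖ ^ 2 := by
  have hcs : -(‖a - z‖ * ‖g - G‖) ≤ ⟪a - z, g⟫ := by
    have hsplit : ⟪a - z, g⟫ = ⟪a - z, G⟫ + ⟪a - z, g - G⟫ := by
      rw [← inner_add_right, add_sub_cancel]
    linarith [real_inner_comm G (a - z), neg_le_of_abs_le (abs_real_inner_le_norm (a - z) (g - G))]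
  rw [show a - η • g - z = (a - z) - η • g by abel, norm_sub_sq_real, real_inner_smul_right,
    norm_smul, Real.norm_of_nonneg hη, mul_pow]
  nlinarith [mul_le_mul_of_nonneg_left hcs hη]

/-- Each step increases `⟪θ, v⟫` by at least its length. -/
theorem sum_norm_le_of_inner_le {θ g : ℕ → E} {η : ℝ} {v : E} (hη : 0 ≤ η)
    (hθ : ∀ r, θ (r + 1) = θ r - η • g r) (hgv : ∀ r, ⟪g r, v⟫ ≤ -‖g r‖) {s t : ℕ} (hst : s ≤ t) :
    ∑ r ∈ Finset.Ico s t, η * ‖g r‖ ≤ ‖v‖ * (‖θ t‖ + ‖θ s‖) := by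
  have h := le_add_sum_Ico_of_le_add (f := fun r => -⟪θ r, v⟫) (b := fun r => -(η * ‖g r‖))
    hst fun r _ _ => by
      simp only [hθ r, inner_sub_left, real_inner_smul_left]
      nlinarith [mul_le_mul_of_nonneg_left (hgv r) hη]
  have hcs : ⟪θ t - θ s, v⟫ ≤ ‖θ t - θ s‖ * ‖v‖ := real_inner_le_norm _ _
  rw [inner_sub_left] at hcs
  simp only [Finset.sum_neg_distrib] at h
  nlinarith [mul_le_mul_of_nonneg_right (norm_sub_le (θ t) (θ s)) (norm_nonneg v)]

theorem norm_sub_sq_le_add_sum {θ g G : ℕ → E} {η : ℝ} {z : E} {ε D : ℝ} {T t : ℕ} (hη : 0 ≤ η)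
    (hθ : ∀ r, θ (r + 1) = θ r - η • g r) (hTt : T ≤ t)
    (hG : ∀ r, T ≤ r → r < t → 0 ≤ ⟪G r, θ r - z⟫)
    (hgG : ∀ r, T ≤ r → r < t → ‖g r - G r‖ ≤ ε * ‖g r‖)
    (hD : ∀ r, T ≤ r → r < t → ‖θ r - z‖ ≤ D) :
    ‖θ t - z‖ ^ 2 ≤ ‖θ T - z‖ ^ 2 +
      ∑ r ∈ Finset.Ico T t, (2 * ε * D * (η * ‖g r‖) + η ^ 2 * ‖g r‖ ^ 2) := by
  refine le_add_sum_Ico_of_le_add (f := fun r => ‖θ r - z‖ ^ 2) hTt fun r h1 h2 => ?_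
  rw [hθ r]
  refine (norm_sub_smul_sub_sq_le hη (hG r h1 h2)).trans ?_
  have h : ‖θ r - z‖ * ‖g r - G r‖ ≤ D * (ε * ‖g r‖) :=
    mul_le_mul (hD r h1 h2) (hgG r h1 h2) (norm_nonneg _) ((norm_nonneg _).trans (hD r h1 h2))
  nlinarith [mul_le_mul_of_nonneg_left h hη]

theorem norm_sub_sq_le_of_inner_ge {a z u : E} {B δ σ₀ ε : ℝ} (hB : 0 < B) (hz : ‖z‖ = B)
    (hzu : ‖B⁻¹ • z - u‖ ≤ ε) (ha : δ * B ≤ ‖a‖) (ha' : ‖a‖ ≤ (δ + ε) * B)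
    (hau : σ₀ * ‖a‖ ≤ ⟪a, u⟫) (hδ : 0 ≤ δ) (hδ1 : δ ≤ 1) (hσ₀ : -1 ≤ σ₀) (hε1 : ε ≤ 1) :
    ‖a - z‖ ^ 2 ≤ B ^ 2 * (1 + δ ^ 2 - 2 * δ * σ₀ + 9 * ε) := by
  have hε : 0 ≤ ε := (norm_nonneg _).trans hzu
  have hinner : ⟪a, z⟫ = B * ⟪a, u⟫ + B * ⟪a, B⁻¹ • z - u⟫ := by
    rw [inner_sub_right, real_inner_smul_right]
    field_simp
    ring
  have hcs : -(‖a‖ * ε) ≤ ⟪a, B⁻¹ • z - u⟫ := neg_le_of_abs_le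
    ((abs_real_inner_le_norm _ _).trans (mul_le_mul_of_nonneg_left hzu (norm_nonneg _)))
  rw [norm_sub_sq_real, hz, hinner]
  have h1 : (‖a‖ - δ * B) * (‖a‖ + δ * B) ≤ (ε * B) * (3 * B) :=
    mul_le_mul (by linarith) (by nlinarith) (by nlinarith) (by positivity)
  have h2 : (-σ₀) * (B * (‖a‖ - δ * B)) ≤ 1 * (B * (ε * B)) :=
    mul_le_mul (by linarith) (by nlinarith) (by nlinarith) zero_le_one
  have h3 : B * ‖a‖ * ε ≤ B * (2 * B) * ε := by gcongr; nlinarith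
  nlinarith [mul_le_mul_of_nonneg_left hau hB.le, mul_le_mul_of_nonneg_left hcs hB.le]

theorem le_inner_of_norm_sub_sq_le {a z u : E} {B X ε : ℝ} (hB : 0 < B) (ha : ‖a‖ = B)
    (hz : ‖z‖ = B) (haz : ‖a - z‖ ^ 2 ≤ B ^ 2 * X) (hzu : ‖B⁻¹ • z - u‖ ≤ ε) :
    1 - X / 2 - ε ≤ ⟪B⁻¹ • a, u⟫ := by
  have hinner : ⟪B⁻¹ • a, u⟫ = B⁻¹ ^ 2 * ⟪a, z⟫ - ⟪B⁻¹ • a, B⁻¹ • z - u⟫ := by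
    rw [inner_sub_right, real_inner_smul_left, real_inner_smul_left, real_inner_smul_right]
    ring
  have hcs : ⟪B⁻¹ • a, B⁻¹ • z - u⟫ ≤ ε := by
    refine (real_inner_le_norm _ _).trans ?_
    rw [norm_smul, ha, Real.norm_of_nonneg (inv_nonneg.2 hB.le), inv_mul_cancel₀ hB.ne', one_mul]
    exact hzu
  have haz' : ⟪a, z⟫ = B ^ 2 - ‖a - z‖ ^ 2 / 2 := by
    rw [norm_sub_sq_real, ha, hz]
    ring
  have hX : B⁻¹ ^ 2 * ‖a - z‖ ^ 2 ≤ X := by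
    rw [inv_pow, inv_mul_le_iff₀ (by positivity)]
    exact haz
  have hB2 : B⁻¹ ^ 2 * B ^ 2 = 1 := by field_simp
  rw [hinner, haz']
  nlinarith

theorem inner_inv_norm_smul_ge_of_window {θ g G : ℕ → E} {z u : E} {η ε δ σ₀ C : ℝ} {T t : ℕ}
    (hη : 0 ≤ η) (hθ : ∀ r, θ (r + 1) = θ r - η • g r) (hTt : T ≤ t)
    (hε : 0 ≤ ε) (hε1 : ε ≤ 1) (hδ : 0 ≤ δ) (hδ1 : δ ≤ 1) (hσ₀ : -1 ≤ σ₀) (hC : 0 ≤ C)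
    (hB : 0 < ‖θ t‖) (hz : ‖z‖ = ‖θ t‖) (hzu : ‖‖θ t‖⁻¹ • z - u‖ ≤ ε)
    (hρT : δ * ‖θ t‖ ≤ ‖θ T‖) (hρT' : ‖θ T‖ ≤ (δ + ε) * ‖θ t‖) (hTu : σ₀ * ‖θ T‖ ≤ ⟪θ T, u⟫)
    (hG : ∀ r, T ≤ r → r < t → 0 ≤ ⟪G r, θ r - z⟫)
    (hgG : ∀ r, T ≤ r → r < t → ‖g r - G r‖ ≤ ε * ‖g r‖)
    (hpath : ∑ r ∈ Finset.Ico T t, η * ‖g r‖ ≤ C * (‖θ t‖ + ‖θ T‖))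
    (hsq : ∑ r ∈ Finset.Ico T t, η ^ 2 * ‖g r‖ ^ 2 ≤ ε * ‖θ t‖ ^ 2) :
    (1 + 2 * δ * σ₀ - δ ^ 2) / 2 - (6 + 9 * C * (1 + C)) * ε ≤ ⟪‖θ t‖⁻¹ • θ t, u⟫ := by
  set B := ‖θ t‖
  have hρT2 : ‖θ T‖ ≤ 2 * B := by nlinarith
  have hP : ∑ r ∈ Finset.Ico T t, η * ‖g r‖ ≤ 3 * C * B := by nlinarith
  have hD : ∀ r, T ≤ r → r < t → ‖θ r - z‖ ≤ 3 * (1 + C) * B := by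
    intro r h1 h2
    have hsub : ∑ k ∈ Finset.Ico T r, η * ‖g k‖ ≤ ∑ k ∈ Finset.Ico T t, η * ‖g k‖ :=
      Finset.sum_le_sum_of_subset_of_nonneg (Finset.Ico_subset_Ico_right h2.le)
        fun k _ _ => by positivity
    linarith [norm_sub_le_add_sum hη hθ z h1, norm_sub_le (θ T) z]
  have hstart := norm_sub_sq_le_of_inner_ge hB hz hzu hρT hρT' hTu hδ hδ1 hσ₀ hε1
  have hprop := norm_sub_sq_le_add_sum hη hθ hTt hG hgG hD
  rw [Finset.sum_add_distrib, ← Finset.mul_sum] at hprop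
  have herr : 2 * ε * (3 * (1 + C) * B) * ∑ r ∈ Finset.Ico T t, η * ‖g r‖ ≤
      2 * ε * (3 * (1 + C) * B) * (3 * C * B) :=
    mul_le_mul_of_nonneg_left hP (by positivity)
  have hend : ‖θ t - z‖ ^ 2 ≤ B ^ 2 * (1 + δ ^ 2 - 2 * δ * σ₀ + (10 + 18 * C * (1 + C)) * ε) := by
    nlinarith
  linarith [le_inner_of_norm_sub_sq_le hB rfl hz hend hzu]

section DirectionalConvergence

variable {θ g G : ℕ → E} {F : E → ℝ} {θR : ℝ → E} {u v : E} {η : ℝ}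

theorem eventually_le_inner_inv_norm_smul (hη : 0 < η) (hθ : ∀ r, θ (r + 1) = θ r - η • g r)
    (hsum : Summable fun r => ‖g r‖ ^ 2)
    (hmono : ∀ᶠ s in atTop, ∀ t, s ≤ t → F (θ t) ≤ F (θ s))
    (hgG : ∀ ε > 0, ∀ᶠ r in atTop, ‖g r - G r‖ ≤ ε * ‖g r‖)
    (hconv : ∀ r z, F (θ r) - F z ≤ ⟪G r, θ r - z⟫) (hgv : ∀ r, ⟪g r, v⟫ ≤ -‖g r‖)
    (hρ : Tendsto (fun t => ‖θ t‖) atTop atTop)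
    (hθR : ∀ B > 0, ‖θR B‖ = B ∧ ∀ w, ‖w‖ ≤ B → F (θR B) ≤ F w)
    (hu : Tendsto (fun B : ℝ => B⁻¹ • θR B) atTop (𝓝 u))
    {δ σ₀ ε : ℝ} (hδ : 0 < δ) (hδ1 : δ < 1) (hσ₀ : -1 ≤ σ₀)
    (hc : ∀ᶠ t in atTop, σ₀ ≤ ⟪‖θ t‖⁻¹ • θ t, u⟫) (hε : 0 < ε) (hε1 : ε ≤ 1) :
    ∀ᶠ t in atTop, (1 + 2 * δ * σ₀ - δ ^ 2) / 2 - (6 + 9 * ‖v‖ * (1 + ‖v‖)) * ε ≤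
      ⟪‖θ t‖⁻¹ • θ t, u⟫ := by
  have hstep : Tendsto (fun r => η * ‖g r‖) atTop (𝓝 0) := by
    simpa using (hsum.tendsto_atTop_zero.sqrt.const_mul η)
  obtain ⟨S, hS⟩ := eventually_atTop.1
    (hc.and (hmono.and ((hgG ε hε).and (hstep.eventually (ge_mem_nhds one_pos)))))
  obtain ⟨R₁, hR₁⟩ := eventually_atTop.1 (hu.eventually (Metric.closedBall_mem_nhds u hε))
  set Q := η ^ 2 * ∑' r, ‖g r‖ ^ 2
  filter_upwards [eventually_ge_atTop S, hρ.eventually_ge_atTop (max R₁ 1),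
    hρ.eventually_gt_atTop (‖θ S‖ / δ), hρ.eventually_ge_atTop (1 / ε),
    hρ.eventually_ge_atTop (Q / ε)] with t hSt hB₁ hBS hBε hBQ
  set B := ‖θ t‖
  have hB : 0 < B := zero_lt_one.trans_le ((le_max_right _ _).trans hB₁)
  -- Compare `θ` on `[T, t]` with `z = θR B`, where `T > S` is a time at which `‖θ‖` crosses
  -- `δ B`; there `F z ≤ F (θ t) ≤ F (θ r)`, so `⟪G r, θ r - z⟫ ≥ 0`.
  obtain ⟨T, hST, hTt, hT₁, hT₂⟩ := exists_crossing (f := fun r => ‖θ r‖) (M := 1) hSt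
    (by rwa [div_lt_iff₀' hδ] at hBS) (by nlinarith : δ * B ≤ B) fun r hr => by
      have h := norm_sub_le_add_sum hη.le hθ 0 r.le_succ
      simp only [sub_zero, Nat.Ico_succ_singleton, Finset.sum_singleton] at h
      linarith [(hS r hr).2.2.2]
  obtain ⟨hzB, hzmin⟩ := hθR B hB
  have hρT : 0 < ‖θ T‖ := (mul_pos hδ hB).trans_le hT₁
  refine inner_inv_norm_smul_ge_of_window hη.le hθ hTt hε.le hε1 hδ.le hδ1.le hσ₀ (norm_nonneg v)
    hB hzB ?_ hT₁ ?_ ?_ (fun r h₁ h₂ => ?_) (fun r h₁ _ => (hS r (hST.le.trans h₁)).2.2.1)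
    (sum_norm_le_of_inner_le hη.le hθ hgv hTt) ?_
  · simpa [dist_eq_norm] using hR₁ B ((le_max_left _ _).trans hB₁)
  · rw [div_le_iff₀ hε] at hBε
    linarith
  · have h := (hS T hST.le).1
    rw [real_inner_smul_left, le_inv_mul_iff₀ hρT] at h
    linarith
  · linarith [hconv r (θR B), hzmin (θ t) le_rfl, (hS r (hST.le.trans h₁)).2.1 t h₂.le]
  · rw [← Finset.mul_sum]
    calc η ^ 2 * ∑ r ∈ Finset.Ico T t, ‖g r‖ ^ 2 ≤ Q :=
          mul_le_mul_of_nonneg_left (hsum.sum_le_tsum _ fun _ _ => sq_nonneg _) (sq_nonneg η)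
      _ ≤ ε * B ^ 2 := by
          rw [div_le_iff₀ hε] at hBQ
          have hB1 : 1 ≤ B := (le_max_right _ _).trans hB₁
          nlinarith [mul_le_mul_of_nonneg_left hB1 (mul_nonneg hε.le hB.le)]

theorem tendsto_inv_norm_smul_of_approx_gradient (hη : 0 < η)
    (hθ : ∀ r, θ (r + 1) = θ r - η • g r) (hsum : Summable fun r => ‖g r‖ ^ 2)
    (hmono : ∀ᶠ s in atTop, ∀ t, s ≤ t → F (θ t) ≤ F (θ s))
    (hgG : ∀ ε > 0, ∀ᶠ r in atTop, ‖g r - G r‖ ≤ ε * ‖g r‖)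
    (hconv : ∀ r z, F (θ r) - F z ≤ ⟪G r, θ r - z⟫) (hgv : ∀ r, ⟪g r, v⟫ ≤ -‖g r‖)
    (hρ : Tendsto (fun t => ‖θ t‖) atTop atTop)
    (hθR : ∀ B > 0, ‖θR B‖ = B ∧ ∀ w, ‖w‖ ≤ B → F (θR B) ≤ F w)
    (hu : Tendsto (fun B : ℝ => B⁻¹ • θR B) atTop (𝓝 u)) :
    Tendsto (fun t => ‖θ t‖⁻¹ • θ t) atTop (𝓝 u) := by
  have hu1 : ‖u‖ = 1 := by
    refine tendsto_nhds_unique hu.norm (tendsto_const_nhds.congr' ?_)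
    filter_upwards [eventually_gt_atTop 0] with B hB
    rw [norm_smul, (hθR B hB).1, Real.norm_of_nonneg (inv_nonneg.2 hB.le),
      inv_mul_cancel₀ hB.ne']
  refine tendsto_of_inner_tendsto_one hu1 ((hρ.eventually_gt_atTop 0).mono fun t ht =>
    norm_smul_inv_norm (norm_pos_iff.1 ht)) (tendsto_one_of_liminf_bootstrap (fun t => ?_)
    fun δ hδ hδ1 σ₀ hσ₀ hc ε hε => ?_)
  · calc |⟪‖θ t‖⁻¹ • θ t, u⟫| ≤ ‖‖θ t‖⁻¹ • θ t‖ * ‖u‖ := abs_real_inner_le_norm _ _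
      _ ≤ 1 := by rw [hu1, mul_one]; exact norm_inv_norm_smul_le _
  · set K := 6 + 9 * ‖v‖ * (1 + ‖v‖)
    have hK : 1 ≤ K := by nlinarith [norm_nonneg v]
    filter_upwards [eventually_le_inner_inv_norm_smul hη hθ hsum hmono hgG hconv hgv hρ hθR hu hδ
      hδ1 hσ₀ hc (ε := min ε 1 / K) (by positivity)
      (div_le_one_of_le₀ ((min_le_right _ _).trans hK) (by positivity))] with t ht
    have hKε : K * (min ε 1 / K) ≤ ε := by
      rw [mul_div_cancel₀ _ (by positivity)]
      exact min_le_left _ _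
    linarith

end DirectionalConvergence

section MarginLoss

variable {ι : Type*} [Fintype ι] {x : ι → E} {y w : ι → ℝ} {φ φ' : ℝ → ℝ}

def weightedLoss (φ : ℝ → ℝ) (x : ι → E) (y w : ι → ℝ) (θ : E) : ℝ :=
  ∑ i, w i * φ (y i * ⟪θ, x i⟫)

def weightedLossGrad (φ' : ℝ → ℝ) (x : ι → E) (y w : ι → ℝ) (θ : E) : E :=
  ∑ i, (w i * y i * φ' (y i * ⟪θ, x i⟫)) • x i

theorem inner_weightedLossGrad (θ h : E) :
    ⟪weightedLossGrad φ' x y w θ, h⟫ = ∑ i, w i * φ' (y i * ⟪θ, x i⟫) * (y i * ⟪h, x i⟫) := by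
  simp only [weightedLossGrad, sum_inner, real_inner_smul_left]
  exact Finset.sum_congr rfl fun i _ => by rw [real_inner_comm h (x i)]; ring

theorem weightedLoss_nonneg (hw : ∀ i, 0 ≤ w i) (hφ : ∀ t, 0 ≤ φ t) (θ : E) :
    0 ≤ weightedLoss φ x y w θ :=
  Finset.sum_nonneg fun i _ => mul_nonneg (hw i) (hφ _)

theorem convexOn_weightedLoss (hw : ∀ i, 0 ≤ w i) (hφ : ConvexOn ℝ Set.univ φ) :
    ConvexOn ℝ Set.univ (weightedLoss φ x y w) := by
  refine ⟨convex_univ, fun a _ b _ α β hα hβ hαβ => ?_⟩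
  simp only [weightedLoss, smul_eq_mul, Finset.mul_sum, ← Finset.sum_add_distrib]
  refine Finset.sum_le_sum fun i _ => ?_
  have hi := hφ.2 (Set.mem_univ (y i * ⟪a, x i⟫)) (Set.mem_univ (y i * ⟪b, x i⟫)) hα hβ hαβ
  simp only [smul_eq_mul] at hi
  rw [inner_add_left, real_inner_smul_left, real_inner_smul_left,
    show y i * (α * ⟪a, x i⟫ + β * ⟪b, x i⟫) = α * (y i * ⟪a, x i⟫) + β * (y i * ⟪b, x i⟫) by
      ring]
  nlinarith [mul_le_mul_of_nonneg_left hi (hw i)]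

theorem weightedLoss_sub_le_inner (hw : ∀ i, 0 ≤ w i) (hφ : ConvexOn ℝ Set.univ φ)
    (hd : ∀ a, HasDerivAt φ (φ' a) a) (θ z : E) :
    weightedLoss φ x y w θ - weightedLoss φ x y w z ≤ ⟪weightedLossGrad φ' x y w θ, θ - z⟫ := by
  rw [inner_weightedLossGrad, weightedLoss, weightedLoss, ← Finset.sum_sub_distrib]
  refine Finset.sum_le_sum fun i _ => ?_
  have h := hφ.add_mul_sub_le_of_hasDerivAt (hd (y i * ⟪θ, x i⟫)) (y i * ⟪z, x i⟫)
  rw [inner_sub_left]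
  nlinarith [mul_le_mul_of_nonneg_left h (hw i)]

theorem weightedLoss_add_le {L : ℝ≥0} (hw : ∀ i, 0 ≤ w i) (hw1 : ∑ i, w i ≤ 1)
    (hx : ∀ i, ‖x i‖ ≤ 1) (hy : ∀ i, |y i| = 1) (hd : ∀ a, HasDerivAt φ (φ' a) a)
    (hlip : LipschitzWith L φ') (θ h : E) :
    weightedLoss φ x y w (θ + h) ≤
      weightedLoss φ x y w θ + ⟪weightedLossGrad φ' x y w θ, h⟫ + L / 2 * ‖h‖ ^ 2 := by
  have hterm : ∀ i, w i * φ (y i * ⟪θ + h, x i⟫) ≤ w i * φ (y i * ⟪θ, x i⟫) +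
      w i * φ' (y i * ⟪θ, x i⟫) * (y i * ⟪h, x i⟫) + w i * (L / 2 * ‖h‖ ^ 2) := fun i => by
    have hsq : (y i * ⟪h, x i⟫) ^ 2 ≤ ‖h‖ ^ 2 := by
      simpa only [sq_abs] using
        pow_le_pow_left₀ (abs_nonneg _) (abs_mul_inner_le_norm (hx i) (hy i) h) 2
    have hφh := image_add_le_of_lipschitzWith_deriv hd hlip (y i * ⟪θ, x i⟫) (y i * ⟪h, x i⟫)
    rw [inner_add_left, mul_add]
    nlinarith [mul_le_mul_of_nonneg_left hφh (hw i),
      mul_le_mul_of_nonneg_left hsq (mul_nonneg (hw i) (by positivity : (0 : ℝ) ≤ L / 2))]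
  calc weightedLoss φ x y w (θ + h)
      ≤ ∑ i, (w i * φ (y i * ⟪θ, x i⟫) + w i * φ' (y i * ⟪θ, x i⟫) * (y i * ⟪h, x i⟫) +
          w i * (L / 2 * ‖h‖ ^ 2)) := Finset.sum_le_sum fun i _ => hterm i
    _ = weightedLoss φ x y w θ + ⟪weightedLossGrad φ' x y w θ, h⟫ +
          (∑ i, w i) * (L / 2 * ‖h‖ ^ 2) := by
      rw [inner_weightedLossGrad, Finset.sum_add_distrib, Finset.sum_add_distrib, Finset.sum_mul]
      rfl
    _ ≤ _ := by
      nlinarith [mul_le_mul_of_nonneg_right hw1 (by positivity : (0 : ℝ) ≤ L / 2 * ‖h‖ ^ 2)]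

theorem weightedLoss_add_smul_lt [Nonempty ι] {v : E} (hw : ∀ i, 0 < w i) (hanti : StrictAnti φ)
    (hy : ∀ i, |y i| = 1) (hv : ∀ i, ⟪v, x i⟫ = y i) (θ : E) {ε : ℝ} (hε : 0 < ε) :
    weightedLoss φ x y w (θ + ε • v) < weightedLoss φ x y w θ := by
  refine Finset.sum_lt_sum_of_nonempty Finset.univ_nonempty fun i _ => ?_
  have hyy : y i * y i = 1 := by nlinarith [sq_abs (y i), hy i]
  have hmargin : y i * ⟪θ + ε • v, x i⟫ = y i * ⟪θ, x i⟫ + ε := by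
    rw [inner_add_left, real_inner_smul_left, hv i]
    linear_combination ε * hyy
  rw [hmargin]
  exact mul_lt_mul_of_pos_left (hanti (lt_add_of_pos_right _ hε)) (hw i)

theorem inner_weightedLossGrad_le_neg_norm {v : E} (hw : ∀ i, 0 ≤ w i)
    (hneg : ∀ a, φ' a < 0) (hx : ∀ i, ‖x i‖ ≤ 1) (hy : ∀ i, |y i| = 1) (hv : ∀ i, ⟪v, x i⟫ = y i)
    (θ : E) : ⟪weightedLossGrad φ' x y w θ, v⟫ ≤ -‖weightedLossGrad φ' x y w θ‖ := by
  have hnorm := norm_sum_smul_le hx fun i => w i * y i * φ' (y i * ⟪θ, x i⟫)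
  rw [inner_weightedLossGrad]
  simp only [weightedLossGrad] at hnorm ⊢
  have hterm : ∀ i, w i * φ' (y i * ⟪θ, x i⟫) * (y i * ⟪v, x i⟫) =
      -|w i * y i * φ' (y i * ⟪θ, x i⟫)| := fun i => by
    have hyy : y i * y i = 1 := by nlinarith [sq_abs (y i), hy i]
    rw [abs_mul, abs_mul, hy i, abs_of_nonneg (hw i), abs_of_neg (hneg _), hv i]
    linear_combination w i * φ' (y i * ⟪θ, x i⟫) * hyy
  rw [Finset.sum_congr rfl fun i _ => hterm i, Finset.sum_neg_distrib]
  linarith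

theorem abs_deriv_le_of_norm_le_mul_norm_sum {K : ℝ} (hK : ∀ c : ι → ℝ, ‖c‖ ≤ K * ‖∑ i, c i • x i‖)
    (hw : ∀ i, 0 < w i) (hy : ∀ i, |y i| = 1) (θ : E) (i : ι) :
    |φ' (y i * ⟪θ, x i⟫)| ≤ K * ‖weightedLossGrad φ' x y w θ‖ / w i := by
  rw [le_div_iff₀ (hw i)]
  have h := (norm_le_pi_norm (fun j => w j * y j * φ' (y j * ⟪θ, x j⟫)) i).trans
    (hK fun j => w j * y j * φ' (y j * ⟪θ, x j⟫))
  rw [Real.norm_eq_abs, abs_mul, abs_mul, hy i, abs_of_pos (hw i)] at h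
  unfold weightedLossGrad
  linarith

theorem norm_weightedLossGrad_sub_le {w' : ι → ℝ} {K : ℝ}
    (hK : ∀ c : ι → ℝ, ‖c‖ ≤ K * ‖∑ i, c i • x i‖) (hw' : ∀ i, 0 < w' i)
    (hx : ∀ i, ‖x i‖ ≤ 1) (hy : ∀ i, |y i| = 1) (θ : E) :
    ‖weightedLossGrad φ' x y w θ - weightedLossGrad φ' x y w' θ‖ ≤
      K * (∑ i, |w i - w' i| / w' i) * ‖weightedLossGrad φ' x y w' θ‖ := by
  have hsub : weightedLossGrad φ' x y w θ - weightedLossGrad φ' x y w' θ =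
      ∑ i, ((w i - w' i) * y i * φ' (y i * ⟪θ, x i⟫)) • x i := by
    simp only [weightedLossGrad, ← Finset.sum_sub_distrib, ← sub_smul, sub_mul]
  rw [hsub, mul_assoc, Finset.sum_mul, Finset.mul_sum]
  refine (norm_sum_smul_le hx _).trans (Finset.sum_le_sum fun i _ => ?_)
  rw [abs_mul, abs_mul, hy i, mul_one]
  calc |w i - w' i| * |φ' (y i * ⟪θ, x i⟫)|
      ≤ |w i - w' i| * (K * ‖weightedLossGrad φ' x y w' θ‖ / w' i) :=
        mul_le_mul_of_nonneg_left (abs_deriv_le_of_norm_le_mul_norm_sum hK hw' hy θ i)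
          (abs_nonneg _)
    _ = K * (|w i - w' i| / w' i * ‖weightedLossGrad φ' x y w' θ‖) := by ring

theorem tendsto_norm_atTop_of_weightedLossGrad [Nonempty ι] {α : Type*} {l : Filter α} {K : ℝ}
    (hK : ∀ c : ι → ℝ, ‖c‖ ≤ K * ‖∑ i, c i • x i‖) (hw : ∀ i, 0 < w i) (hx : ∀ i, ‖x i‖ ≤ 1)
    (hy : ∀ i, |y i| = 1) (hmono : Monotone φ') (hneg : ∀ a, φ' a < 0) {θ : α → E}
    (h : Tendsto (fun t => ‖weightedLossGrad φ' x y w (θ t)‖) l (𝓝 0)) :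
    Tendsto (fun t => ‖θ t‖) l atTop := by
  obtain i := Classical.arbitrary ι
  have hderiv : Tendsto (fun t => φ' (y i * ⟪θ t, x i⟫)) l (𝓝 0) := by
    refine squeeze_zero_norm (fun t => abs_deriv_le_of_norm_le_mul_norm_sum hK hw hy (θ t) i) ?_
    simpa using (h.const_mul K).div_const (w i)
  exact tendsto_atTop_mono (fun t => (le_abs_self _).trans (abs_mul_inner_le_norm (hx i) (hy i) _))
    (hmono.tendsto_atTop_of_tendsto_zero hneg hderiv)

theorem norm_eq_of_isMinOn_weightedLoss [Nonempty ι] (hli : LinearIndependent ℝ x)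
    (hw : ∀ i, 0 < w i) (hanti : StrictAnti φ) (hy : ∀ i, |y i| = 1) {R : ℝ} {z : E}
    (hz : z ∈ Metric.closedBall 0 R)
    (hmin : IsMinOn (weightedLoss φ x y w) (Metric.closedBall 0 R) z) : ‖z‖ = R := by
  obtain ⟨v, hv⟩ := hli.exists_inner_eq y
  exact norm_eq_of_isMinOn_closedBall (fun θ _ hε => weightedLoss_add_smul_lt hw hanti hy hv θ hε)
    hz hmin

end MarginLoss

theorem tendsto_inv_norm_smul_of_grw {ι : Type*} [Fintype ι] [Nonempty ι] {x : ι → E}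
    {y : ι → ℝ} {φ φ' : ℝ → ℝ} {L : ℝ≥0} (hx : ∀ i, ‖x i‖ ≤ 1) (hy : ∀ i, |y i| = 1)
    (hli : LinearIndependent ℝ x) (hφ0 : ∀ t, 0 ≤ φ t) (hφ : ConvexOn ℝ Set.univ φ)
    (hd : ∀ a, HasDerivAt φ (φ' a) a) (hlip : LipschitzWith L φ') (hanti : StrictAnti φ)
    {q : ℕ → ι → ℝ} (hq0 : ∀ t i, 0 ≤ q t i) {qlim : ι → ℝ}
    (hqlim : ∀ i, Tendsto (fun t => q t i) atTop (𝓝 (qlim i))) (hqpos : ∀ i, 0 < qlim i)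
    (hqlim1 : ∑ i, qlim i ≤ 1) {θR : ℝ → E}
    (hθR : ∀ B > 0, ‖θR B‖ = B ∧
      ∀ w, ‖w‖ ≤ B → weightedLoss φ x y qlim (θR B) ≤ weightedLoss φ x y qlim w)
    {u : E} (hu : Tendsto (fun B : ℝ => B⁻¹ • θR B) atTop (𝓝 u)) {η : ℝ} (hη : 0 < η)
    (hLη : L * η ≤ 1 / 4) {θ : ℕ → E}
    (hθ : ∀ t, θ (t + 1) = θ t - η • weightedLossGrad φ' x y (q t) (θ t)) :
    Tendsto (fun t => ‖θ t‖⁻¹ • θ t) atTop (𝓝 u) := by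
  obtain ⟨v, hv⟩ := hli.exists_inner_eq y
  obtain ⟨K, -, hK⟩ := hli.exists_norm_le_mul_norm_sum
  set G := fun t => weightedLossGrad φ' x y qlim (θ t)
  set κ := fun t => K * ∑ i, |q t i - qlim i| / qlim i
  have hκ : Tendsto κ atTop (𝓝 0) := by
    simpa using tendsto_const_nhds.mul (tendsto_finsetSum _ fun i _ =>
      ((hqlim i).sub_const (qlim i)).abs.div_const (qlim i))
  have hgG : ∀ t, ‖weightedLossGrad φ' x y (q t) (θ t) - G t‖ ≤ κ t * ‖G t‖ :=
    fun t => norm_weightedLossGrad_sub_le hK hqpos hx hy (θ t)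
  have hw : ∀ i, 0 ≤ qlim i := fun i => (hqpos i).le
  have hdesc := eventually_descent hη.le hLη hθ
    (fun r h => weightedLoss_add_le hw hqlim1 hx hy hd hlip (θ r) h) hgG hκ
  have hGsum : Summable fun t => ‖G t‖ ^ 2 := by
    refine (summable_mul_left_iff (by positivity : η / 4 ≠ 0)).1 ?_
    exact summable_of_eventually_le_sub (fun t => weightedLoss_nonneg hw hφ0 (θ t))
      (fun t => by positivity) hdesc
  have hρ := tendsto_norm_atTop_of_weightedLossGrad hK hqpos hx hy
    (hφ.monotone_of_hasDerivAt hd) (hφ.deriv_neg_of_strictAnti hd hanti)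
    (by simpa using hGsum.tendsto_atTop_zero.sqrt)
  exact tendsto_inv_norm_smul_of_approx_gradient hη hθ (summable_sq_of_norm_sub_le hgG hκ hGsum)
    (eventually_forall_le_of_eventually_succ_le (hdesc.mono fun t ht => by
      linarith [sq_nonneg ‖G t‖, mul_nonneg hη.le (sq_nonneg ‖G t‖)]))
    (fun ε hε => eventually_norm_sub_le_mul_norm hgG hκ hε)
    (fun r z => weightedLoss_sub_le_inner hw hφ hd (θ r) z)
    (fun r => inner_weightedLossGrad_le_neg_norm (hq0 r) (hφ.deriv_neg_of_strictAnti hd hanti)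
      hx hy hv (θ r)) hρ hθR hu

theorem stmt_10_general {d n : ℕ} (hn : 0 < n)
    (x : Fin n → EuclideanSpace ℝ (Fin d)) (hx : ∀ i, ‖x i‖ ≤ 1)
    (y : Fin n → ℝ) (hy : ∀ i, y i = 1 ∨ y i = -1)
    (hli : LinearIndependent ℝ x)
    (φ φ' : ℝ → ℝ) (L : NNReal)
    (hφpos : ∀ t : ℝ, 0 < φ t)
    (hφconv : ConvexOn ℝ Set.univ φ)
    (hφderiv : ∀ a : ℝ, HasDerivAt φ (φ' a) a)
    (hφlip : LipschitzWith L φ')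
    (hφanti : StrictAnti φ)
    (q : ℕ → Fin n → ℝ)
    (hq0 : ∀ t i, 0 ≤ q t i)
    (hq1 : ∀ t, ∑ i, q t i = 1)
    (qlim : Fin n → ℝ)
    (hqlim : ∀ i, Tendsto (fun t => q t i) atTop (nhds (qlim i)))
    (hqpos : ∀ i, 0 < qlim i)
    (θR : ℝ → EuclideanSpace ℝ (Fin d))
    (hθR : ∀ R : ℝ, 0 < R → ‖θR R‖ ≤ R ∧
      ∀ θ : EuclideanSpace ℝ (Fin d), ‖θ‖ ≤ R →
        (∑ i, qlim i * φ (y i * ⟪θR R, x i⟫)) ≤ ∑ i, qlim i * φ (y i * ⟪θ, x i⟫)) :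
    (∃ R₀ > (0 : ℝ), ∀ R : ℝ, R₀ ≤ R →
      ∀ θ' : EuclideanSpace ℝ (Fin d),
        (‖θ'‖ ≤ R ∧ ∀ θ : EuclideanSpace ℝ (Fin d), ‖θ‖ ≤ R →
          (∑ i, qlim i * φ (y i * ⟪θ', x i⟫)) ≤ ∑ i, qlim i * φ (y i * ⟪θ, x i⟫)) →
        θ' = θR R) ∧
    (∀ u : EuclideanSpace ℝ (Fin d),
      Tendsto (fun R : ℝ => R⁻¹ • θR R) atTop (nhds u) →
      ∃ η₀ > (0 : ℝ), ∀ η : ℝ, 0 < η → η ≤ η₀ →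
        ∀ θ : ℕ → EuclideanSpace ℝ (Fin d),
          (∀ t, θ (t + 1) = θ t - η • ∑ i, (q t i * y i * φ' (y i * ⟪θ t, x i⟫)) • x i) →
          Tendsto (fun t => ‖θ t‖⁻¹ • θ t) atTop (nhds u)) := by
  have : Nonempty (Fin n) := ⟨⟨0, hn⟩⟩
  have hyabs : ∀ i, |y i| = 1 := fun i => by rcases hy i with h | h <;> simp [h]
  set F := weightedLoss φ x y qlim
  have hsphere : ∀ R, ∀ z ∈ Metric.closedBall 0 R, IsMinOn F (Metric.closedBall 0 R) z →
      ‖z‖ = R := fun _ _ => norm_eq_of_isMinOn_weightedLoss hli hqpos hφanti hyabs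
  have hminOn : ∀ R θ', (∀ θ : EuclideanSpace ℝ (Fin d), ‖θ‖ ≤ R → F θ' ≤ F θ) →
      IsMinOn F (Metric.closedBall 0 R) θ' := fun R θ' h =>
    isMinOn_iff.2 fun θ hθ => h θ (mem_closedBall_zero_iff.1 hθ)
  refine ⟨⟨1, one_pos, fun R hR θ' ⟨hθ'R, hθ'min⟩ => ?_⟩,
    fun u hu => ⟨(4 * (L + 1))⁻¹, by positivity, fun η hη hη₀ θ hθ => ?_⟩⟩
  · have hR0 : 0 < R := one_pos.trans_le hR
    exact eq_of_isMinOn_closedBall ((convexOn_weightedLoss (fun i => (hqpos i).le) hφconv).subset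
      (Set.subset_univ _) (convex_closedBall 0 R)) (hsphere R) (mem_closedBall_zero_iff.2 hθ'R)
      (hminOn R θ' hθ'min) (mem_closedBall_zero_iff.2 (hθR R hR0).1) (hminOn R _ (hθR R hR0).2)
  · have hqlim1 : ∑ i, qlim i = 1 :=
      tendsto_nhds_unique (tendsto_finsetSum _ fun i _ => hqlim i) (by simp [hq1])
    have hLη : (L : ℝ) * η ≤ 1 / 4 := by
      have h := mul_le_mul_of_nonneg_left hη₀ (by positivity : (0 : ℝ) ≤ 4 * (L + 1))
      rw [mul_inv_cancel₀ (by positivity)] at h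
      nlinarith
    exact tendsto_inv_norm_smul_of_grw hx hyabs hli (fun t => (hφpos t).le) hφconv hφderiv hφlip
      hφanti hq0 hqlim hqpos hqlim1.le (fun B hB => ⟨hsphere B _
        (mem_closedBall_zero_iff.2 (hθR B hB).1) (hminOn B _ (hθR B hB).2), (hθR B hB).2⟩)
      hu hη hLη hθ

/-- Under the assumptions of Statement 7, with
`F(θ) = Σᵢ qᵢ φ(yᵢ⟨θ,xᵢ⟩)` and `θR R` a minimizer of `F` over the closed ball of
radius `R`: (a) for all sufficiently large `R` the minimizer over the ball of
radius `R` is unique (hence equal to `θR R`); (b) if `u = lim_{R→∞} θR R / R`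
exists, then there is `η₀ > 0` such that for every `0 < η ≤ η₀` the normalized
GRW iterates `θ^{(t)}/‖θ^{(t)}‖` converge to `u`. -/
theorem stmt_10 {d n : ℕ} (hn : 0 < n)
    (x : Fin n → EuclideanSpace ℝ (Fin d)) (hx : ∀ i, ‖x i‖ ≤ 1)
    (y : Fin n → ℝ) (hy : ∀ i, y i = 1 ∨ y i = -1)
    (hli : LinearIndependent ℝ x)
    (φ φ' : ℝ → ℝ) (L : NNReal)
    (hφpos : ∀ t : ℝ, 0 < φ t)
    (hφconv : ConvexOn ℝ Set.univ φ)
    (hφderiv : ∀ a : ℝ, HasDerivAt φ (φ' a) a)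
    (hφlip : LipschitzWith L φ')
    (hφanti : StrictAnti φ)
    (hφlim : Tendsto φ atTop (nhds 0))
    (q : ℕ → Fin n → ℝ)
    (hq0 : ∀ t i, 0 ≤ q t i)
    (hq1 : ∀ t, ∑ i, q t i = 1)
    (qlim : Fin n → ℝ)
    (hqlim : ∀ i, Tendsto (fun t => q t i) atTop (nhds (qlim i)))
    (hqpos : ∀ i, 0 < qlim i)
    (θR : ℝ → EuclideanSpace ℝ (Fin d))
    (hθR : ∀ R : ℝ, 0 < R → ‖θR R‖ ≤ R ∧
      ∀ θ : EuclideanSpace ℝ (Fin d), ‖θ‖ ≤ R →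
        (∑ i, qlim i * φ (y i * ⟪θR R, x i⟫)) ≤ ∑ i, qlim i * φ (y i * ⟪θ, x i⟫)) :
    (∃ R₀ > (0 : ℝ), ∀ R : ℝ, R₀ ≤ R →
      ∀ θ' : EuclideanSpace ℝ (Fin d),
        (‖θ'‖ ≤ R ∧ ∀ θ : EuclideanSpace ℝ (Fin d), ‖θ‖ ≤ R →
          (∑ i, qlim i * φ (y i * ⟪θ', x i⟫)) ≤ ∑ i, qlim i * φ (y i * ⟪θ, x i⟫)) →
        θ' = θR R) ∧
    (∀ u : EuclideanSpace ℝ (Fin d),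
      Tendsto (fun R : ℝ => R⁻¹ • θR R) atTop (nhds u) →
      ∃ η₀ > (0 : ℝ), ∀ η : ℝ, 0 < η → η ≤ η₀ →
        ∀ θ : ℕ → EuclideanSpace ℝ (Fin d),
          (∀ t, θ (t + 1) = θ t - η • ∑ i, (q t i * y i * φ' (y i * ⟪θ t, x i⟫)) • x i) →
          Tendsto (fun t => ‖θ t‖⁻¹ • θ t) atTop (nhds u)) :=
  stmt_10_general hn x hx y hy hli φ φ' L hφpos hφconv hφderiv hφlip hφanti q hq0 hq1 qlim hqlim
    hqpos θR hθR
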